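/- Convexity of conditional value-at-risk: for any two integrable real-valued random variables X₁ and X₂ on a common probability space, every λ ∈ [0,1], and every confidence level γ ∈ (0,1), CVaR_γ(λ·X₁ + (1−λ)·X₂) ≤ λ·CVaR_γ(X₁) + (1−λ)·CVaR_γ(X₂). -/

import Mathlib

open MeasureTheory

/-- Value-at-risk of the return `X` at confidence level `β`:
`VaR_β(X) = inf {x ∈ ℝ : ℙ(x + X < 0) ≤ 1 - β}`. -/
noncomputable def VaR {Ω : Type*} [MeasurableSpace Ω] (P : Measure Ω) (X : Ω → ℝ) (β : ℝ) : ℝ :=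
  sInf {x : ℝ | (P {ω | x + X ω < 0}).toReal ≤ 1 - β}

/-- Conditional value-at-risk of the return `X` at confidence level `γ`:
`CVaR_γ(X) = (1/(1-γ)) ∫_γ^1 VaR_β(X) dβ`. -/
noncomputable def CVaR {Ω : Type*} [MeasurableSpace Ω] (P : Measure Ω) (X : Ω → ℝ) (γ : ℝ) : ℝ :=
  (1 / (1 - γ)) * ∫ β in γ..1, VaR P X β

/-!
`VaR_β(X)` is the `β`-quantile of the loss `-X`, and under Lebesgue measure on `(0, 1)` the
quantile function of a law `μ` has law `μ`. Hence `∫₀¹ (VaR_β(X) - t)⁺ dβ = 𝔼[(-X - t)⁺]`, and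
splitting `(γ, 1)` at the monotone function `VaR_β(X)` gives the Rockafellar–Uryasev formula
`CVaR_γ(X) = min_t (t + 𝔼[(-X - t)⁺] / (1 - γ))`, the minimum being attained at `t = VaR_γ(X)`.
The objective is jointly convex in `(X, t)`, so its minimum over `t` is convex in `X`.
-/

open ProbabilityTheory Set Filter

/-- The left-continuous inverse of `cdf μ`; meaningful only for `β ∈ (0, 1)`. -/
noncomputable def quantile (μ : Measure ℝ) (β : ℝ) : ℝ := sInf {x | β ≤ cdf μ x}

section Quantile

variable {μ : Measure ℝ} {β : ℝ}

lemma bddBelow_setOf_le_cdf (h0 : 0 < β) : BddBelow {x | β ≤ cdf μ x} := by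
  obtain ⟨a, ha⟩ := eventually_atBot.1 ((tendsto_cdf_atBot (μ := μ)).eventually (gt_mem_nhds h0))
  refine ⟨a, fun x hx => le_of_not_gt fun hxa => ?_⟩
  exact (ha x hxa.le).not_ge hx

lemma nonempty_setOf_le_cdf (h1 : β < 1) : {x | β ≤ cdf μ x}.Nonempty :=
  ((tendsto_cdf_atTop (μ := μ)).eventually (lt_mem_nhds h1)).exists.imp fun _ => le_of_lt

lemma quantile_le_iff (h0 : 0 < β) (h1 : β < 1) {x : ℝ} : quantile μ β ≤ x ↔ β ≤ cdf μ x := by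
  refine ⟨fun h => ?_, fun h => csInf_le (bddBelow_setOf_le_cdf h0) h⟩
  have h_gt : ∀ y ∈ Ioi x, β ≤ cdf μ y := fun y hy => by
    obtain ⟨z, hz, hzy⟩ := exists_lt_of_csInf_lt (nonempty_setOf_le_cdf h1) (h.trans_lt hy)
    exact hz.trans (monotone_cdf μ hzy.le)
  exact ge_of_tendsto (((cdf μ).right_continuous x).mono Ioi_subset_Ici_self)
    (eventually_nhdsWithin_of_forall h_gt)

lemma monotoneOn_quantile : MonotoneOn (quantile μ) (Ioo 0 1) := fun _ ha _ hb hab =>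
  (quantile_le_iff ha.1 ha.2).2 (hab.trans ((quantile_le_iff hb.1 hb.2).1 le_rfl))

lemma aemeasurable_quantile : AEMeasurable (quantile μ) (volume.restrict (Ioo 0 1)) :=
  aemeasurable_restrict_of_monotoneOn measurableSet_Ioo monotoneOn_quantile

variable [IsProbabilityMeasure μ]

lemma map_quantile : (volume.restrict (Ioo 0 1)).map (quantile μ) = μ := by
  refine (Measure.ext_of_Iic μ _ fun x => ?_).symm
  have h_pre : quantile μ ⁻¹' Iic x ∩ Ioo 0 1 = Ioo 0 1 ∩ Iic (cdf μ x) := by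
    ext β
    constructor
    · rintro ⟨hq, hβ⟩
      exact ⟨hβ, (quantile_le_iff hβ.1 hβ.2).1 hq⟩
    · rintro ⟨hβ, hc⟩
      exact ⟨(quantile_le_iff hβ.1 hβ.2).2 hc, hβ⟩
  rw [Measure.map_apply_of_aemeasurable aemeasurable_quantile measurableSet_Iic,
    Measure.restrict_apply' measurableSet_Ioo, h_pre,
    measure_congr ((Ioo_ae_eq_Ioc (μ := volume)).inter (EventuallyEq.refl _ (Iic (cdf μ x)))),
    Ioc_inter_Iic, min_eq_right (cdf_le_one μ x), Real.volume_Ioc, sub_zero, ofReal_cdf]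

lemma integral_comp_quantile {E : Type*} [NormedAddCommGroup E] [NormedSpace ℝ E] {g : ℝ → E}
    (hg : AEStronglyMeasurable g μ) :
    ∫ β in Ioo 0 1, g (quantile μ β) = ∫ y, g y ∂μ := by
  have h := integral_map aemeasurable_quantile (map_quantile (μ := μ) ▸ hg)
  rwa [map_quantile, eq_comm] at h

lemma integrableOn_comp_quantile_iff {E : Type*} [NormedAddCommGroup E] {g : ℝ → E}
    (hg : AEStronglyMeasurable g μ) :
    IntegrableOn (fun β => g (quantile μ β)) (Ioo 0 1) ↔ Integrable g μ := by
  have h := integrable_map_measure (map_quantile (μ := μ) ▸ hg) aemeasurable_quantile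
  rwa [map_quantile, Iff.comm] at h

end Quantile

section TailIntegral

variable {f : ℝ → ℝ} {γ : ℝ}

lemma setIntegral_Ioo_eq_add_integral_sub (hf : IntegrableOn f (Ioo γ 1)) (hγ : γ ≤ 1) (t : ℝ) :
    ∫ β in Ioo γ 1, f β = (1 - γ) * t + ∫ β in Ioo γ 1, (f β - t) := by
  rw [integral_sub hf (integrableOn_const measure_Ioo_lt_top.ne), setIntegral_const,
    Real.volume_real_Ioo_of_le hγ, smul_eq_mul]
  ring

lemma setIntegral_Ioo_le (hf : IntegrableOn f (Ioo 0 1)) (hγ : γ ∈ Icc 0 1) (t : ℝ) :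
    ∫ β in Ioo γ 1, f β ≤ (1 - γ) * t + ∫ β in Ioo 0 1, max (f β - t) 0 := by
  have h_sub : Ioo γ 1 ⊆ Ioo 0 1 := Ioo_subset_Ioo_left hγ.1
  have h_pos : IntegrableOn (fun β => max (f β - t) 0) (Ioo 0 1) :=
    (hf.sub (integrableOn_const measure_Ioo_lt_top.ne)).pos_part
  rw [setIntegral_Ioo_eq_add_integral_sub (hf.mono_set h_sub) hγ.2 t]
  gcongr
  calc ∫ β in Ioo γ 1, (f β - t) ≤ ∫ β in Ioo γ 1, max (f β - t) 0 :=
        integral_mono ((hf.mono_set h_sub).sub (integrableOn_const measure_Ioo_lt_top.ne))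
          (h_pos.mono_set h_sub) fun β => le_max_left _ _
    _ ≤ ∫ β in Ioo 0 1, max (f β - t) 0 :=
        setIntegral_mono_set h_pos (Eventually.of_forall fun β => le_max_right _ _)
          h_sub.eventuallyLE

lemma setIntegral_Ioo_eq_of_monotoneOn (hf : IntegrableOn f (Ioo 0 1))
    (hmono : MonotoneOn f (Ioo 0 1)) (hγ : γ ∈ Ioo 0 1) :
    ∫ β in Ioo γ 1, f β = (1 - γ) * f γ + ∫ β in Ioo 0 1, max (f β - f γ) 0 := by
  have h_sub : Ioo γ 1 ⊆ Ioo 0 1 := Ioo_subset_Ioo_left hγ.1.le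
  rw [setIntegral_Ioo_eq_add_integral_sub (hf.mono_set h_sub) hγ.2.le (f γ),
    setIntegral_eq_of_subset_of_forall_sdiff_eq_zero measurableSet_Ioo h_sub]
  · refine congrArg _ (setIntegral_congr_fun measurableSet_Ioo fun β hβ => ?_)
    exact (max_eq_left (sub_nonneg.2 (hmono hγ (h_sub hβ) hβ.1.le))).symm
  · rintro β ⟨hβ, hβγ⟩
    have hle : β ≤ γ := le_of_not_gt fun h => hβγ ⟨h, hβ.2⟩
    exact max_eq_right (sub_nonpos.2 (hmono hβ hγ hle))

end TailIntegral

section QuantileTailIntegral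

variable {μ : Measure ℝ} [IsProbabilityMeasure μ] {γ : ℝ}

lemma integrableOn_quantile (hμ : Integrable id μ) : IntegrableOn (quantile μ) (Ioo 0 1) :=
  (integrableOn_comp_quantile_iff aestronglyMeasurable_id).2 hμ

lemma setIntegral_quantile_le (hμ : Integrable id μ) (hγ : γ ∈ Icc 0 1) (t : ℝ) :
    ∫ β in Ioo γ 1, quantile μ β ≤ (1 - γ) * t + ∫ y, max (y - t) 0 ∂μ := by
  rw [← integral_comp_quantile (g := fun y => max (y - t) 0) (by fun_prop)]
  exact setIntegral_Ioo_le (integrableOn_quantile hμ) hγ t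

lemma setIntegral_quantile_eq (hμ : Integrable id μ) (hγ : γ ∈ Ioo 0 1) :
    ∫ β in Ioo γ 1, quantile μ β
      = (1 - γ) * quantile μ γ + ∫ y, max (y - quantile μ γ) 0 ∂μ := by
  rw [← integral_comp_quantile (g := fun y => max (y - quantile μ γ) 0) (by fun_prop)]
  exact setIntegral_Ioo_eq_of_monotoneOn (integrableOn_quantile hμ) monotoneOn_quantile hγ

end QuantileTailIntegral

section RiskMeasures

variable {Ω : Type*} [MeasurableSpace Ω] {P : Measure Ω} {X : Ω → ℝ} {γ : ℝ}

noncomputable def expectedExcessLoss (P : Measure Ω) (X : Ω → ℝ) (t : ℝ) : ℝ :=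
  ∫ ω, max (-X ω - t) 0 ∂P

lemma expectedExcessLoss_convexComb_le [IsFiniteMeasure P] {X₁ X₂ : Ω → ℝ}
    (hX₁ : Integrable X₁ P) (hX₂ : Integrable X₂ P) {lam : ℝ} (hlam : lam ∈ Icc (0 : ℝ) 1)
    (t₁ t₂ : ℝ) :
    expectedExcessLoss P (fun ω => lam * X₁ ω + (1 - lam) * X₂ ω) (lam * t₁ + (1 - lam) * t₂)
      ≤ lam * expectedExcessLoss P X₁ t₁ + (1 - lam) * expectedExcessLoss P X₂ t₂ := by
  obtain ⟨hl0, hl1⟩ := hlam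
  have hE₁ : Integrable (fun ω => lam * max (-X₁ ω - t₁) 0) P :=
    (hX₁.neg.sub (integrable_const t₁)).pos_part.const_mul lam
  have hE₂ : Integrable (fun ω => (1 - lam) * max (-X₂ ω - t₂) 0) P :=
    (hX₂.neg.sub (integrable_const t₂)).pos_part.const_mul (1 - lam)
  simp only [expectedExcessLoss]
  rw [← integral_const_mul, ← integral_const_mul, ← integral_add hE₁ hE₂]
  refine integral_mono ((((hX₁.const_mul lam).add (hX₂.const_mul (1 - lam))).neg.sub
    (integrable_const _)).pos_part) (hE₁.add hE₂) fun ω => max_le ?_ (by positivity)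
  nlinarith [mul_le_mul_of_nonneg_left (le_max_left (-X₁ ω - t₁) 0) hl0,
    mul_le_mul_of_nonneg_left (le_max_left (-X₂ ω - t₂) 0) (sub_nonneg.2 hl1)]

lemma CVaR_eq_inv_mul_setIntegral (hγ : γ ≤ 1) :
    CVaR P X γ = (1 - γ)⁻¹ * ∫ β in Ioo γ 1, VaR P X β := by
  rw [CVaR, one_div, intervalIntegral.integral_of_le hγ, integral_Ioc_eq_integral_Ioo]

lemma expectedExcessLoss_eq_integral_map (hX : AEMeasurable X P) (t : ℝ) :
    expectedExcessLoss P X t = ∫ y, max (y - t) 0 ∂(P.map fun ω => -X ω) :=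
  (integral_map (f := fun y => max (y - t) 0) hX.neg (by fun_prop)).symm

lemma integrable_id_map_neg (hX : Integrable X P) : Integrable id (P.map fun ω => -X ω) :=
  (integrable_map_measure aestronglyMeasurable_id hX.aemeasurable.neg).2 hX.neg

variable [IsProbabilityMeasure P]

lemma measureReal_add_lt_zero (hX : AEMeasurable X P) (x : ℝ) :
    P.real {ω | x + X ω < 0} = 1 - cdf (P.map fun ω => -X ω) x := by
  have hX' : AEMeasurable (fun ω => -X ω) P := hX.neg
  have := Measure.isProbabilityMeasure_map hX'
  have h_set : {ω | x + X ω < 0} = (fun ω => -X ω) ⁻¹' (Iic x)ᶜ := by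
    ext ω
    simp only [mem_ofPred_eq, mem_preimage, mem_compl_iff, mem_Iic, not_le]
    constructor <;> intro h <;> linarith
  rw [h_set, ← map_measureReal_apply_of_aemeasurable hX' measurableSet_Iic.compl,
    probReal_compl_eq_one_sub measurableSet_Iic, cdf_eq_real]

lemma VaR_eq_quantile (hX : AEMeasurable X P) : VaR P X = quantile (P.map fun ω => -X ω) := by
  funext β
  simp only [VaR, quantile, ← measureReal_def, measureReal_add_lt_zero hX, sub_le_sub_iff_left]

lemma setIntegral_VaR_le (hX : Integrable X P) (hγ : γ ∈ Icc 0 1) (t : ℝ) :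
    ∫ β in Ioo γ 1, VaR P X β ≤ (1 - γ) * t + expectedExcessLoss P X t := by
  have := Measure.isProbabilityMeasure_map (μ := P) hX.aemeasurable.neg
  rw [VaR_eq_quantile hX.aemeasurable, expectedExcessLoss_eq_integral_map hX.aemeasurable]
  exact setIntegral_quantile_le (integrable_id_map_neg hX) hγ t

lemma setIntegral_VaR_eq (hX : Integrable X P) (hγ : γ ∈ Ioo 0 1) :
    ∫ β in Ioo γ 1, VaR P X β = (1 - γ) * VaR P X γ + expectedExcessLoss P X (VaR P X γ) := by
  have := Measure.isProbabilityMeasure_map (μ := P) hX.aemeasurable.neg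
  rw [VaR_eq_quantile hX.aemeasurable, expectedExcessLoss_eq_integral_map hX.aemeasurable]
  exact setIntegral_quantile_eq (integrable_id_map_neg hX) hγ

lemma CVaR_le (hX : Integrable X P) (hγ : γ ∈ Ioo 0 1) (t : ℝ) :
    CVaR P X γ ≤ t + (1 - γ)⁻¹ * expectedExcessLoss P X t := by
  have h1γ : 0 < 1 - γ := sub_pos.2 hγ.2
  rw [CVaR_eq_inv_mul_setIntegral hγ.2.le, inv_mul_le_iff₀ h1γ, mul_add,
    mul_inv_cancel_left₀ h1γ.ne']
  exact setIntegral_VaR_le hX ⟨hγ.1.le, hγ.2.le⟩ t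

lemma CVaR_eq (hX : Integrable X P) (hγ : γ ∈ Ioo 0 1) :
    CVaR P X γ = VaR P X γ + (1 - γ)⁻¹ * expectedExcessLoss P X (VaR P X γ) := by
  rw [CVaR_eq_inv_mul_setIntegral hγ.2.le, setIntegral_VaR_eq hX hγ, mul_add,
    inv_mul_cancel_left₀ (sub_pos.2 hγ.2).ne']

end RiskMeasures

/-- Convexity of conditional value-at-risk:
`CVaR_γ(λ·X₁ + (1-λ)·X₂) ≤ λ·CVaR_γ(X₁) + (1-λ)·CVaR_γ(X₂)` for `λ ∈ [0,1]`. -/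
theorem CVaR_convex {Ω : Type*} [MeasurableSpace Ω]
    (P : Measure Ω) [IsProbabilityMeasure P] (X₁ X₂ : Ω → ℝ)
    (hX₁ : Integrable X₁ P) (hX₂ : Integrable X₂ P)
    (lam : ℝ) (hlam : lam ∈ Set.Icc (0 : ℝ) 1) (γ : ℝ) (hγ : γ ∈ Set.Ioo (0 : ℝ) 1) :
    CVaR P (fun ω => lam * X₁ ω + (1 - lam) * X₂ ω) γ
      ≤ lam * CVaR P X₁ γ + (1 - lam) * CVaR P X₂ γ := by
  set t₁ := VaR P X₁ γ
  set t₂ := VaR P X₂ γ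
  calc CVaR P (fun ω => lam * X₁ ω + (1 - lam) * X₂ ω) γ
      ≤ (lam * t₁ + (1 - lam) * t₂) + (1 - γ)⁻¹ * expectedExcessLoss P
          (fun ω => lam * X₁ ω + (1 - lam) * X₂ ω) (lam * t₁ + (1 - lam) * t₂) :=
        CVaR_le ((hX₁.const_mul lam).add (hX₂.const_mul (1 - lam))) hγ _
    _ ≤ (lam * t₁ + (1 - lam) * t₂) + (1 - γ)⁻¹ *
          (lam * expectedExcessLoss P X₁ t₁ + (1 - lam) * expectedExcessLoss P X₂ t₂) := by
        gcongr
        · exact inv_nonneg.2 (sub_pos.2 hγ.2).le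
        · exact expectedExcessLoss_convexComb_le hX₁ hX₂ hlam t₁ t₂
    _ = lam * (t₁ + (1 - γ)⁻¹ * expectedExcessLoss P X₁ t₁)
          + (1 - lam) * (t₂ + (1 - γ)⁻¹ * expectedExcessLoss P X₂ t₂) := by ring
    _ = lam * CVaR P X₁ γ + (1 - lam) * CVaR P X₂ γ := by rw [CVaR_eq hX₁ hγ, CVaR_eq hX₂ hγ]
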